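/- Let C_25 be the cycle graph on 25 vertices. Then: (a) C_25 has a burning sequence of length 5 (indeed b(C_25) = ⌈√25⌉ = 5); and (b) there exists a sequence of vertices u_1, …, u_5 satisfying the greedy condition of the heuristic Gr with guess p = 5 — for every i ∈ {1, …, 5} and every vertex w, |N_{5−i}[w] \ B_{i−1}| ≤ |N_{5−i}[u_i] \ B_{i−1}|, where B_{i−1} = ⋃_{j<i} N_{5−j}[u_j] and B_0 = ∅ — such that B_5 is not the whole vertex set. That is, even when run with the correct guess p = b(G), the greedy heuristic Gr may fail to return a burning sequence on a cycle. -/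

import Mathlib

/-! On a cycle a ball of radius `r` has at most `2r + 1` vertices, so a burning sequence of length
`p` covers at most `1 + 3 + ⋯ + (2p - 1) = p²` vertices; hence `b(C₂₅) ≥ 5`, and `4, 12, 18, 22, 24`
burns `C₂₅` in five steps. Greedy may instead pick `4, 13, 20`: each ball is a maximal choice,
covering `0–8`, `10–16` and `18–22`, but this strands the vertices `9` and `17` and the pair
`23, 24`, which balls of radii `1` and `0` cannot all reach. -/

/-- The closed ball `N_r[v] = {w : dist w v ≤ r}` of radius `r` around `v`. -/
noncomputable def closedBall {V : Type*} [Fintype V] (G : SimpleGraph V) (r : ℕ) (v : V) :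
    Finset V :=
  Finset.univ.filter (fun w => G.dist w v ≤ r)

/-- The set `B_i` of vertices covered after the first `i` steps of the greedy burning
heuristic with guess `p` and selected vertices `u 0, u 1, …`: the union of the balls
`N_{p-(j+1)}[u j]` for `j < i`. -/
noncomputable def greedyCovered {V : Type*} [Fintype V] [DecidableEq V] (G : SimpleGraph V)
    (p : ℕ) (u : ℕ → V) (i : ℕ) : Finset V :=
  (Finset.range i).biUnion (fun j => closedBall G (p - (j + 1)) (u j))

open Finset
open scoped Fin.NatCast Fin.CommRing

lemma Fin.min_val_sub_le_natAbs {n : ℕ} [NeZero n] {x w : Fin n} {k : ℤ} (h : x = w + k) :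
    min (x - w).val (w - x).val ≤ k.natAbs := by
  obtain ⟨m, rfl | rfl⟩ := Int.eq_nat_or_neg k
  · have : x - w = (m : Fin n) := by rw [h]; push_cast; ring
    rw [this, Fin.val_natCast]
    exact min_le_of_left_le (by simpa using Nat.mod_le m n)
  · have : w - x = (m : Fin n) := by rw [h]; push_cast; ring
    rw [this, Fin.val_natCast]
    exact min_le_of_right_le (by simpa using Nat.mod_le m n)

lemma Fin.sum_two_mul_sub_add_one (p : ℕ) : ∑ i : Fin p, (2 * (p - (i.1 + 1)) + 1) = p ^ 2 := by
  induction p with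
  | zero => simp
  | succ p ih =>
    rw [Fin.sum_univ_succ]
    simp only [Fin.val_zero, Fin.val_succ, Nat.add_sub_add_right, ih]
    ring_nf
    omega

namespace SimpleGraph

variable {n : ℕ}

lemma cycleGraph_dist_add_natCast_le (v : Fin (n + 2)) (m : ℕ) :
    (cycleGraph (n + 2)).dist v (v + m) ≤ m := by
  induction m with
  | zero => simp
  | succ m ih =>
    have hadj : (cycleGraph (n + 2)).Adj (v + m) (v + (m + 1 : ℕ)) := by
      rw [cycleGraph_adj]
      right
      push_cast
      ring
    calc (cycleGraph (n + 2)).dist v (v + (m + 1 : ℕ))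
        ≤ (cycleGraph (n + 2)).dist v (v + m)
            + (cycleGraph (n + 2)).dist (v + m) (v + (m + 1 : ℕ)) :=
          cycleGraph_connected.dist_triangle
      _ ≤ m + 1 := by rw [dist_eq_one_iff_adj.mpr hadj]; omega

lemma cycleGraph_exists_eq_add_intCast_of_walk {x w : Fin (n + 2)}
    (p : (cycleGraph (n + 2)).Walk x w) : ∃ k : ℤ, k.natAbs ≤ p.length ∧ x = w + k := by
  induction p with
  | nil => exact ⟨0, by simp⟩
  | @cons x y w hadj q ih =>
    obtain ⟨k, hk, rfl⟩ := ih
    rw [cycleGraph_adj] at hadj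
    rcases hadj with h | h
    · refine ⟨k + 1, by rw [Walk.length_cons]; omega, ?_⟩
      push_cast
      rw [← h]; ring
    · refine ⟨k - 1, by rw [Walk.length_cons]; omega, ?_⟩
      push_cast
      rw [← h]; ring

theorem cycleGraph_dist (v w : Fin (n + 2)) :
    (cycleGraph (n + 2)).dist v w = min (w - v).val (v - w).val := by
  apply le_antisymm
  · refine le_min ?_ ?_
    · simpa using cycleGraph_dist_add_natCast_le v (w - v).val
    · simpa [dist_comm] using cycleGraph_dist_add_natCast_le w (v - w).val
  · obtain ⟨p, hp⟩ := cycleGraph_connected.exists_walk_length_eq_dist v w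
    obtain ⟨k, hk, hvw⟩ := cycleGraph_exists_eq_add_intCast_of_walk p
    rw [min_comm, ← hp]
    exact (Fin.min_val_sub_le_natAbs hvw).trans hk

lemma closedBall_cycleGraph (r : ℕ) (v : Fin (n + 2)) :
    closedBall (cycleGraph (n + 2)) r v =
      univ.filter (fun w => min (v - w).val (w - v).val ≤ r) := by
  simp only [closedBall, cycleGraph_dist]

lemma card_closedBall_cycleGraph_le (r : ℕ) (v : Fin (n + 2)) :
    (closedBall (cycleGraph (n + 2)) r v).card ≤ 2 * r + 1 := by
  have hsub : closedBall (cycleGraph (n + 2)) r v ⊆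
      (Icc (-r : ℤ) r).image (fun k : ℤ => v + (k : Fin (n + 2))) := by
    intro w hw
    obtain ⟨p, hp⟩ := cycleGraph_connected.exists_walk_length_eq_dist w v
    obtain ⟨k, hk, rfl⟩ := cycleGraph_exists_eq_add_intCast_of_walk p
    have hkr : k.natAbs ≤ r := hk.trans (hp ▸ (mem_filter.mp hw).2)
    exact mem_image.mpr ⟨k, mem_Icc.mpr (by omega), rfl⟩
  calc (closedBall (cycleGraph (n + 2)) r v).card
      ≤ ((Icc (-r : ℤ) r).image (fun k : ℤ => v + (k : Fin (n + 2)))).card :=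
        card_le_card hsub
    _ ≤ (Icc (-r : ℤ) r).card := card_image_le
    _ = 2 * r + 1 := by rw [Int.card_Icc]; omega

variable {V : Type*}

def IsBurningSequence (G : SimpleGraph V) {p : ℕ} (u : Fin p → V) : Prop :=
  ∀ v, ∃ i : Fin p, G.dist v (u i) ≤ p - (i.1 + 1)

noncomputable def burningNumber (G : SimpleGraph V) : ℕ :=
  sInf {p | ∃ u : Fin p → V, G.IsBurningSequence u}

lemma IsBurningSequence.card_le_sq [Fintype V] {G : SimpleGraph V} {p : ℕ} {u : Fin p → V}
    (hu : G.IsBurningSequence u) (hball : ∀ r v, (closedBall G r v).card ≤ 2 * r + 1) :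
    Fintype.card V ≤ p ^ 2 := by
  classical
  have hcover : (univ : Finset V) ⊆
      univ.biUnion fun i : Fin p => closedBall G (p - (i.1 + 1)) (u i) := by
    intro v _
    obtain ⟨i, hi⟩ := hu v
    exact mem_biUnion.mpr ⟨i, mem_univ i, mem_filter.mpr ⟨mem_univ v, hi⟩⟩
  calc Fintype.card V = (univ : Finset V).card := rfl
    _ ≤ _ := card_le_card hcover
    _ ≤ ∑ i : Fin p, (closedBall G (p - (i.1 + 1)) (u i)).card := card_biUnion_le
    _ ≤ ∑ i : Fin p, (2 * (p - (i.1 + 1)) + 1) := sum_le_sum fun i _ => hball _ _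
    _ = p ^ 2 := Fin.sum_two_mul_sub_add_one p

lemma isBurningSequence_equivFin_symm [Fintype V] (G : SimpleGraph V) :
    G.IsBurningSequence (Fintype.equivFin V).symm :=
  fun v => ⟨Fintype.equivFin V v, by simp⟩

lemma burningNumber_le {G : SimpleGraph V} {p : ℕ} {u : Fin p → V}
    (hu : G.IsBurningSequence u) : G.burningNumber ≤ p :=
  Nat.sInf_le ⟨u, hu⟩

lemma card_le_burningNumber_sq [Fintype V] {G : SimpleGraph V}
    (hball : ∀ r v, (closedBall G r v).card ≤ 2 * r + 1) :
    Fintype.card V ≤ G.burningNumber ^ 2 :=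
  have ⟨_, hu⟩ := Nat.sInf_mem (s := {p | ∃ u : Fin p → V, G.IsBurningSequence u})
    ⟨_, _, G.isBurningSequence_equivFin_symm⟩
  hu.card_le_sq hball

def IsGreedyRun [Fintype V] [DecidableEq V] (G : SimpleGraph V) (p : ℕ) (u : ℕ → V) : Prop :=
  ∀ i < p, ∀ w, (closedBall G (p - (i + 1)) w \ greedyCovered G p u i).card
    ≤ (closedBall G (p - (i + 1)) (u i) \ greedyCovered G p u i).card

end SimpleGraph

open SimpleGraph

lemma isBurningSequence_cycleGraph_25 :
    (cycleGraph 25).IsBurningSequence ![4, 12, 18, 22, 24] := by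
  simp only [IsBurningSequence, cycleGraph_dist]
  decide

lemma burningNumber_cycleGraph_25 : (cycleGraph 25).burningNumber = 5 := by
  have h25 : 25 ≤ (cycleGraph 25).burningNumber ^ 2 := by
    simpa using card_le_burningNumber_sq (card_closedBall_cycleGraph_le (n := 23))
  have h5 := burningNumber_le isBurningSequence_cycleGraph_25
  nlinarith

def greedyRunC25 : ℕ → Fin 25 := fun i => [4, 13, 20, 23].getD i 9

lemma isGreedyRun_greedyRunC25 : (cycleGraph 25).IsGreedyRun 5 greedyRunC25 := by
  simp only [IsGreedyRun, greedyCovered, closedBall_cycleGraph]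
  decide

lemma greedyCovered_greedyRunC25_ne_univ :
    greedyCovered (cycleGraph 25) 5 greedyRunC25 5 ≠ univ := by
  simp only [greedyCovered, closedBall_cycleGraph]
  decide

/-- Corollary 1: (a) the cycle `C_25` has a burning sequence of length 5,
and indeed its burning number equals `5 = ⌈√25⌉`; (b) there is a run of the greedy
heuristic Gr with the correct guess `p = 5` (each `u i` maximizing the number of newly
covered vertices) whose final covered set `B_5` is not the whole vertex set, i.e. Gr may
fail to return a burning sequence on a cycle. -/
theorem greedy_may_fail_on_cycle_C25 :
    (∃ u : Fin 5 → Fin 25, ∀ v : Fin 25, ∃ i : Fin 5,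
      (SimpleGraph.cycleGraph 25).dist v (u i) ≤ 5 - (i.1 + 1)) ∧
    sInf {p : ℕ | ∃ u : Fin p → Fin 25, ∀ v : Fin 25, ∃ i : Fin p,
      (SimpleGraph.cycleGraph 25).dist v (u i) ≤ p - (i.1 + 1)} = 5 ∧
    5 = Nat.ceil (Real.sqrt 25) ∧
    ∃ u : ℕ → Fin 25,
      (∀ i < 5, ∀ w : Fin 25,
        (closedBall (SimpleGraph.cycleGraph 25) (5 - (i + 1)) w
            \ greedyCovered (SimpleGraph.cycleGraph 25) 5 u i).card
          ≤ (closedBall (SimpleGraph.cycleGraph 25) (5 - (i + 1)) (u i)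
            \ greedyCovered (SimpleGraph.cycleGraph 25) 5 u i).card) ∧
      greedyCovered (SimpleGraph.cycleGraph 25) 5 u 5 ≠ Finset.univ := by
  have hsqrt : Real.sqrt 25 = 5 := by
    rw [show (25 : ℝ) = 5 ^ 2 by norm_num, Real.sqrt_sq (by norm_num)]
  refine ⟨⟨_, isBurningSequence_cycleGraph_25⟩, burningNumber_cycleGraph_25, ?_,
    greedyRunC25, isGreedyRun_greedyRunC25, greedyCovered_greedyRunC25_ne_univ⟩
  rw [hsqrt]
  norm_num
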